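/- arXiv:math/0605079 — 4 statements merged into one kernel-verified Lean document; each statement's English description precedes it below -/
import Mathlib

section
/- Let $\bar{p} = (p_1,p_2,p_3)$ be a triple of integers. The circle action $z \cdot g = \mathrm{diag}(z^{p_1},z^{p_2},z^{p_3}) \, g \, \mathrm{diag}(1,1,\bar{z}^{p_1+p_2+p_3})$ satisfies the Eschenburg freeness condition (for every permutation $\sigma$, $\gcd(a_1 - b_{\sigma(1)}, a_2 - b_{\sigma(2)}) = 1$ with $\bar{a} = \bar{p}$ and $\bar{b} = (0,0,p_1+p_2+p_3)$) if and only if $\gcd(p_i, p_j) = 1$ for all $i \neq j$. -/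
/-!
As `σ` ranges over `S₃`, the pair `(σ 0, σ 1)` ranges over all pairs of distinct indices, so the
freeness condition asks that `p₁ - bᵢ` and `p₂ - bⱼ` be coprime for all `i ≠ j`. Up to symmetry
these are three conditions: `(p₁, p₂)`, `(p₁, p₂ - s)` and `(p₁ - s, p₂)` coprime, where
`s = p₁ + p₂ + p₃`. Since `p₂ - s ≡ -p₃ (mod p₁)` and `p₁ - s ≡ -p₃ (mod p₂)`, they say exactly
that the `pᵢ` are pairwise coprime.
-/

open Equiv

theorem Equiv.Perm.forall_apply_apply_iff_forall_ne {α : Type*} [DecidableEq α] {x y : α}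
    (hxy : x ≠ y) (P : α → α → Prop) :
    (∀ σ : Perm α, P (σ x) (σ y)) ↔ ∀ i j, i ≠ j → P i j := by
  refine ⟨fun h i j hij => ?_, fun h σ => h _ _ (σ.injective.ne hxy)⟩
  -- `swap (τ y) j * τ` sends `x ↦ i` and `y ↦ j`.
  set τ := swap x i
  have hτy : i ≠ τ y := by simpa [τ] using τ.injective.ne hxy
  simpa [τ, swap_apply_of_ne_of_ne hτy hij] using h (swap (τ y) j * τ)

theorem isCoprime_sub_iff_of_add_add_eq {R : Type*} [CommRing R] {a b c s : R}
    (h : a + b + c = s) : IsCoprime a (b - s) ↔ IsCoprime a c := by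
  rw [← h, show b - (a + b + c) = -c + a * (-1) by ring, IsCoprime.add_mul_left_right_iff,
    IsCoprime.neg_right_iff]

/-- The Eschenburg freeness condition for `a = (p₁,p₂,p₃)`, `b = (0,0,p₁+p₂+p₃)`
holds iff the `pᵢ` are pairwise coprime. -/
theorem eschenburg_free_iff_pairwise_coprime (p₁ p₂ p₃ : ℤ) :
    (∀ σ : Equiv.Perm (Fin 3),
      Int.gcd (![p₁, p₂, p₃] 0 - ![0, 0, p₁ + p₂ + p₃] (σ 0))
              (![p₁, p₂, p₃] 1 - ![0, 0, p₁ + p₂ + p₃] (σ 1)) = 1) ↔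
    (∀ i j : Fin 3, i ≠ j → Int.gcd (![p₁, p₂, p₃] i) (![p₁, p₂, p₃] j) = 1) := by
  have h₁₃ : IsCoprime p₁ (p₂ - (p₁ + p₂ + p₃)) ↔ IsCoprime p₁ p₃ :=
    isCoprime_sub_iff_of_add_add_eq rfl
  have h₂₃ : IsCoprime (p₁ - (p₁ + p₂ + p₃)) p₂ ↔ IsCoprime p₂ p₃ :=
    isCoprime_comm.trans (isCoprime_sub_iff_of_add_add_eq (by ring))
  rw [Perm.forall_apply_apply_iff_forall_ne (by decide : (0 : Fin 3) ≠ 1)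
    (fun i j => Int.gcd (![p₁, p₂, p₃] 0 - ![0, 0, p₁ + p₂ + p₃] i)
      (![p₁, p₂, p₃] 1 - ![0, 0, p₁ + p₂ + p₃] j) = 1)]
  simp only [Fin.forall_fin_succ, ← Int.isCoprime_iff_gcd_eq_one]
  simp [h₁₃, h₂₃, isCoprime_comm, and_assoc]
end

section
/- Let $p_1, p_2, p_3$ be pairwise coprime integers satisfying the positive curvature condition ($0 < p_1 \le p_2 \le p_3$, or $0 < p_2 \le p_3$ and $p_1 < -p_3$, up to reordering and overall sign change). If the multiset $\{|p_1+p_2|, |p_1+p_3|, |p_2+p_3|\}$ equals the multiset $\{|k|, |l|, |k+l|\}$ for some coprime integers $k, l$ with the identification coming from an Aloff–Wallach space (i.e., setting $p_3' = -(p_1+p_2)$ gives the same multiset), then $p_1 + p_2 + p_3 = 0$. -/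
/-- The positive curvature condition in sorted form. -/
def PosCurvSorted (a b c : ℤ) : Prop :=
  (0 < a ∧ a ≤ b ∧ b ≤ c) ∨ (0 < b ∧ b ≤ c ∧ a < -c)

/-- The positive curvature condition, up to reordering and overall sign change. -/
def PosCurv (p : Fin 3 → ℤ) : Prop :=
  ∃ ε : ℤ, (ε = 1 ∨ ε = -1) ∧ ∃ σ : Equiv.Perm (Fin 3),
    PosCurvSorted (ε * p (σ 0)) (ε * p (σ 1)) (ε * p (σ 2))

lemma posCurvSorted_ne_zero {a b c : ℤ} (h : PosCurvSorted a b c) :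
    a ≠ 0 ∧ b ≠ 0 ∧ c ≠ 0 := by
  unfold PosCurvSorted at h; omega

lemma posCurv_ne_zero {p : Fin 3 → ℤ} (h : PosCurv p) : ∀ i, p i ≠ 0 := by
  obtain ⟨ε, hε, σ, hσ⟩ := h
  have hne := posCurvSorted_ne_zero hσ
  intro i
  have h3 : ∀ j : Fin 3, j = 0 ∨ j = 1 ∨ j = 2 := by decide
  have hi : σ (σ⁻¹ i) = i := σ.apply_symm_apply i
  rcases h3 (σ⁻¹ i) with hj | hj | hj <;> rw [hj] at hi <;> rw [← hi] <;>
    rcases hε with rfl | rfl <;> intro hz <;> rw [hz] at hne <;> simp at hne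

lemma pair_eq {a b x y : ℤ} (h : ({a, b} : Multiset ℤ) = {x, y}) :
    (a = x ∧ b = y) ∨ (a = y ∧ b = x) := by
  have ha : a ∈ ({x, y} : Multiset ℤ) := h ▸ (by simp)
  simp only [Multiset.insert_eq_cons, Multiset.mem_cons, Multiset.mem_singleton] at ha
  simp only [Multiset.insert_eq_cons] at h
  rcases ha with rfl | rfl
  · left
    refine ⟨rfl, ?_⟩
    have := (Multiset.cons_inj_right a).mp h
    simpa using this
  · right
    refine ⟨rfl, ?_⟩
    rw [show (x ::ₘ {a} : Multiset ℤ) = a ::ₘ {x} by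
      rw [← Multiset.cons_zero a, ← Multiset.cons_zero x, Multiset.cons_swap]] at h
    have := (Multiset.cons_inj_right a).mp h
    simpa using this

lemma triple_eq {a b c x y z : ℤ} (h : ({a, b, c} : Multiset ℤ) = {x, y, z}) :
    (a = x ∧ ((b = y ∧ c = z) ∨ (b = z ∧ c = y))) ∨
    (a = y ∧ ((b = x ∧ c = z) ∨ (b = z ∧ c = x))) ∨
    (a = z ∧ ((b = x ∧ c = y) ∨ (b = y ∧ c = x))) := by
  have ha : a ∈ ({x, y, z} : Multiset ℤ) := h ▸ (by simp)
  simp only [Multiset.insert_eq_cons, Multiset.mem_cons, Multiset.mem_singleton] at ha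
  simp only [Multiset.insert_eq_cons] at h
  rcases ha with rfl | rfl | rfl
  · left
    refine ⟨rfl, pair_eq ?_⟩
    have := (Multiset.cons_inj_right a).mp h
    simpa [Multiset.insert_eq_cons] using this
  · right; left
    refine ⟨rfl, pair_eq ?_⟩
    rw [Multiset.cons_swap x a] at h
    have := (Multiset.cons_inj_right a).mp h
    simpa [Multiset.insert_eq_cons] using this
  · right; right
    refine ⟨rfl, pair_eq ?_⟩
    rw [show (x ::ₘ y ::ₘ {a} : Multiset ℤ) = a ::ₘ x ::ₘ {y} by
      rw [← Multiset.cons_zero a, ← Multiset.cons_zero y, Multiset.cons_swap y a,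
        Multiset.cons_swap x a]] at h
    have := (Multiset.cons_inj_right a).mp h
    simpa [Multiset.insert_eq_cons] using this

/-- If the multiset of orders `{|pᵢ+pⱼ|}` matches that of an Aloff–Wallach space
`{|k|, |l|, |k+l|}` with `k, l` coprime, then `p₁ + p₂ + p₃ = 0`. -/
theorem lens_space_orders_force_aloff_wallach (p₁ p₂ p₃ : ℤ)
    (hcop : Int.gcd p₁ p₂ = 1 ∧ Int.gcd p₁ p₃ = 1 ∧ Int.gcd p₂ p₃ = 1)
    (hpos : PosCurv ![p₁, p₂, p₃])
    (h : ∃ k l : ℤ, Int.gcd k l = 1 ∧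
      ({|p₁ + p₂|, |p₁ + p₃|, |p₂ + p₃|} : Multiset ℤ) = {|k|, |l|, |k + l|}) :
    p₁ + p₂ + p₃ = 0 := by
  have hne := posCurv_ne_zero hpos
  have h1 : p₁ ≠ 0 := by simpa using hne 0
  have h2 : p₂ ≠ 0 := by simpa using hne 1
  have h3 : p₃ ≠ 0 := by simpa using hne 2
  obtain ⟨k, l, -, hm⟩ := h
  have := triple_eq hm
  simp only [abs_eq_abs] at this
  omega
end

section
/- Let $\gamma_1, \gamma_2 \in SU(2)$ with eigenvalues $\{\lambda_1, \bar\lambda_1\}$ and $\{\lambda_2, \bar\lambda_2\}$ respectively, and let $p \ge 1$ be an integer. Then there exists $z \in U(1)$ such that the multisets $\{z\lambda_1, z\bar\lambda_1, z^p\}$ and $\{\lambda_2, \bar\lambda_2, z^{p+2}\}$ are equal if and only if either (a) $\lambda_1 = \pm\lambda_2$ or $\lambda_1 = \pm\bar\lambda_2$, or (b) $\lambda_1^p = \lambda_2^{p+1}$ or $\lambda_1^p = \bar\lambda_2^{p+1}$. -/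
open ComplexConjugate

/-! On the unit circle `conj l = l⁻¹`, so everything happens in a field with the multisets
`{z a, z a⁻¹, zᵖ}` and `{b, b⁻¹, zᵖ⁺²}`. Either `zᵖ` is matched with `zᵖ⁺²`, so `z² = 1` and
`z a ∈ {b, b⁻¹}`, giving (a); or `zᵖ ∈ {b, b⁻¹}` and `zᵖ⁺² ∈ {z a, z a⁻¹}`, so `b^{±1} = zᵖ`,
`a^{±1} = zᵖ⁺¹`, and `(zᵖ⁺¹)ᵖ = (zᵖ)ᵖ⁺¹` gives (b). Conversely `z = ±1` realises (a), and
`z = a b⁻¹`, resp. `z = a b`, realises (b). -/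

theorem Multiset.pair_eq_or_mem_pair_of_triple_eq {α : Type*} {x y w u v w' : α}
    (h : ({x, y, w} : Multiset α) = {u, v, w'}) :
    (w = w' ∧ ({x, y} : Multiset α) = {u, v}) ∨ ((w = u ∨ w = v) ∧ (w' = x ∨ w' = y)) := by
  by_cases hw : w = w'
  · subst hw
    refine .inl ⟨rfl, ?_⟩
    simpa only [insert_eq_cons, ← singleton_add, ← add_assoc, add_left_inj] using h
  · have hu : w ∈ ({u, v, w'} : Multiset α) := h ▸ by simp
    have hx : w' ∈ ({x, y, w} : Multiset α) := h ▸ by simp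
    simp only [insert_eq_cons, mem_cons, mem_singleton] at hu hx
    exact .inr ⟨by tauto, by tauto⟩

theorem Multiset.triple_swap {α : Type*} (x y w : α) :
    ({x, y, w} : Multiset α) = {y, x, w} := by
  simp only [insert_eq_cons, cons_swap]

theorem Multiset.triple_rotate {α : Type*} (x y w : α) :
    ({x, y, w} : Multiset α) = {w, y, x} := by
  simp only [insert_eq_cons, ← singleton_add]
  abel

section

variable {K : Type*} [Field K] {a b z : K} {p : ℕ}

theorem eq_or_pow_eq_of_triple_eq (hz : z ≠ 0)
    (h : ({z * a, z * a⁻¹, z ^ p} : Multiset K) = {b, b⁻¹, z ^ (p + 2)}) :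
    (a = b ∨ a = -b ∨ a = b⁻¹ ∨ a = -b⁻¹) ∨ (a ^ p = b ^ (p + 1) ∨ a ^ p = b⁻¹ ^ (p + 1)) := by
  rcases Multiset.pair_eq_or_mem_pair_of_triple_eq h with ⟨hpow, hpair⟩ | ⟨hb, ha⟩
  · have hz2 : z ^ 2 = 1 :=
      (mul_left_cancel₀ (pow_ne_zero p hz) (by rw [← pow_add, ← hpow, mul_one])).symm
    have hza : z * a ∈ ({b, b⁻¹} : Multiset K) := hpair ▸ Multiset.mem_cons_self _ _
    simp only [Multiset.insert_eq_cons, Multiset.mem_cons, Multiset.mem_singleton] at hza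
    left
    rcases sq_eq_one_iff.1 hz2 with rfl | rfl
    · simp only [one_mul] at hza
      tauto
    · simp only [neg_one_mul, neg_eq_iff_eq_neg] at hza
      tauto
  · right
    have ha' : a = z ^ (p + 1) ∨ a = (z ^ (p + 1))⁻¹ := by
      rcases ha with h | h
      · exact .inl (mul_left_cancel₀ hz (by rw [← pow_succ', h])).symm
      · exact .inr (inv_eq_iff_eq_inv.1 (mul_left_cancel₀ hz (by rw [← pow_succ', h])).symm)
    have hb' : b = z ^ p ∨ b = (z ^ p)⁻¹ := hb.imp Eq.symm fun h ↦ inv_eq_iff_eq_inv.1 h.symm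
    rcases ha' with rfl | rfl <;> rcases hb' with rfl | rfl <;>
      simp [inv_pow, pow_right_comm z p]

theorem triple_eq_of_sq_eq_one (hz : z ^ 2 = 1) (h : z * a = b ∨ z * a = b⁻¹) :
    ({z * a, z * a⁻¹, z ^ p} : Multiset K) = {b, b⁻¹, z ^ (p + 2)} := by
  have hz_inv : z⁻¹ = z := inv_eq_of_mul_eq_one_right (by rw [← sq, hz])
  rw [show z * a⁻¹ = (z * a)⁻¹ by rw [mul_inv, hz_inv], pow_add, hz, mul_one]
  rcases h with h | h
  · rw [h]
  · rw [h, inv_inv, Multiset.triple_swap]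

theorem triple_eq_of_pow_eq (ha : a ≠ 0) (hb : b ≠ 0) (h : a ^ p = b ^ (p + 1)) :
    ({a * b⁻¹ * a, a * b⁻¹ * a⁻¹, (a * b⁻¹) ^ p} : Multiset K) =
      {b, b⁻¹, (a * b⁻¹) ^ (p + 2)} := by
  have hp : (a * b⁻¹) ^ p = b := by
    rw [mul_pow, h, inv_pow, pow_succ]; field_simp
  have hp2 : (a * b⁻¹) ^ (p + 2) = a * b⁻¹ * a := by
    rw [pow_add, hp]; field_simp
  rw [hp, hp2, show a * b⁻¹ * a⁻¹ = b⁻¹ by field_simp, Multiset.triple_rotate]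

theorem triple_eq_of_pow_eq_inv (ha : a ≠ 0) (hb : b ≠ 0) (h : a ^ p = b⁻¹ ^ (p + 1)) :
    ({a * b * a, a * b * a⁻¹, (a * b) ^ p} : Multiset K) = {b, b⁻¹, (a * b) ^ (p + 2)} := by
  simpa only [inv_inv, Multiset.triple_swap b⁻¹] using triple_eq_of_pow_eq ha (inv_ne_zero hb) h

end

theorem fixed_point_criterion_general (p : ℕ) (l₁ l₂ : ℂ)
    (hl₁ : ‖l₁‖ = 1) (hl₂ : ‖l₂‖ = 1) :
    (∃ z : ℂ, ‖z‖ = 1 ∧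
      ({z * l₁, z * conj l₁, z ^ p} : Multiset ℂ) = {l₂, conj l₂, z ^ (p + 2)}) ↔
    ((l₁ = l₂ ∨ l₁ = -l₂ ∨ l₁ = conj l₂ ∨ l₁ = -conj l₂) ∨
     (l₁ ^ p = l₂ ^ (p + 1) ∨ l₁ ^ p = (conj l₂) ^ (p + 1))) := by
  rw [← Complex.inv_eq_conj hl₁, ← Complex.inv_eq_conj hl₂]
  have h₁ : l₁ ≠ 0 := norm_ne_zero_iff.1 (by simp [hl₁])
  have h₂ : l₂ ≠ 0 := norm_ne_zero_iff.1 (by simp [hl₂])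
  constructor
  · rintro ⟨z, hz, h⟩
    exact eq_or_pow_eq_of_triple_eq (norm_ne_zero_iff.1 (by simp [hz])) h
  · rintro ((h | h | h | h) | h | h)
    · exact ⟨1, norm_one, triple_eq_of_sq_eq_one (one_pow 2) (.inl (by rw [one_mul, h]))⟩
    · exact ⟨-1, by simp, triple_eq_of_sq_eq_one (by norm_num) (.inl (by rw [h]; ring))⟩
    · exact ⟨1, norm_one, triple_eq_of_sq_eq_one (one_pow 2) (.inr (by rw [one_mul, h]))⟩
    · exact ⟨-1, by simp, triple_eq_of_sq_eq_one (by norm_num) (.inr (by rw [h]; ring))⟩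
    · exact ⟨l₁ * l₂⁻¹, by simp [hl₁, hl₂], triple_eq_of_pow_eq h₁ h₂ h⟩
    · exact ⟨l₁ * l₂, by simp [hl₁, hl₂], triple_eq_of_pow_eq_inv h₁ h₂ h⟩

/-- Eigenvalue matching criterion: for `γ₁, γ₂ ∈ SU(2)` with eigenvalues `{λ₁, λ̄₁}`,
`{λ₂, λ̄₂}`, there is `z ∈ U(1)` with `{zλ₁, zλ̄₁, zᵖ} = {λ₂, λ̄₂, z^{p+2}}` as multisets
iff (a) `λ₁ = ±λ₂` or `λ₁ = ±λ̄₂`, or (b) `λ₁ᵖ = λ₂^{p+1}` or `λ₁ᵖ = λ̄₂^{p+1}`. -/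
theorem fixed_point_criterion (p : ℕ) (hp : 1 ≤ p) (l₁ l₂ : ℂ)
    (hl₁ : ‖l₁‖ = 1) (hl₂ : ‖l₂‖ = 1) :
    (∃ z : ℂ, ‖z‖ = 1 ∧
      ({z * l₁, z * conj l₁, z ^ p} : Multiset ℂ) = {l₂, conj l₂, z ^ (p + 2)}) ↔
    ((l₁ = l₂ ∨ l₁ = -l₂ ∨ l₁ = conj l₂ ∨ l₁ = -conj l₂) ∨
     (l₁ ^ p = l₂ ^ (p + 1) ∨ l₁ ^ p = (conj l₂) ^ (p + 1))) :=
  fixed_point_criterion_general p l₁ l₂ hl₁ hl₂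
end

section
/- Let $n \ge 1$ and let $p_1, p_2, p_3$ be distinct primes each congruent to $1$ modulo $n$. Suppose $\gamma$ is a root of unity whose order divides $n$, and $z \in U(1)$ satisfies $z^{p_1} = \gamma$, $z^{p_2} = \bar\gamma$, and $z^{p_1+p_2} = 1$. Then $\gamma = \pm 1$ and $\gamma^2 = 1$. -/
open ComplexConjugate

lemma aux_pow_eq_self {n p : ℕ} (hp : 1 ≤ p) (hm : p ≡ 1 [MOD n])
    (γ : ℂ) (hγ : γ ^ n = 1) : γ ^ p = γ := by
  obtain ⟨k, hk⟩ := (Nat.modEq_iff_dvd' hp).mp hm.symm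
  have hpk : p = n * k + 1 := by omega
  rw [hpk, pow_succ, pow_mul, hγ, one_pow, one_mul]

/-- Core computation: for distinct primes `p₁, p₂, p₃ ≡ 1 (mod n)`, a root of unity `γ`
of order dividing `n` and `z ∈ U(1)` with `z^{p₁} = γ`, `z^{p₂} = γ̄`, `z^{p₁+p₂} = 1`,
one has `γ = ±1` and `γ² = 1`. -/
theorem core_freeness_computation (n p₁ p₂ p₃ : ℕ) (hn : 1 ≤ n)
    (h₁ : p₁.Prime) (h₂ : p₂.Prime) (h₃ : p₃.Prime)
    (hd₁₂ : p₁ ≠ p₂) (hd₁₃ : p₁ ≠ p₃) (hd₂₃ : p₂ ≠ p₃)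
    (hm₁ : p₁ ≡ 1 [MOD n]) (hm₂ : p₂ ≡ 1 [MOD n]) (hm₃ : p₃ ≡ 1 [MOD n])
    (γ z : ℂ) (hγ : γ ^ n = 1) (hz : ‖z‖ = 1)
    (e₁ : z ^ p₁ = γ) (e₂ : z ^ p₂ = conj γ) (e₃ : z ^ (p₁ + p₂) = 1) :
    (γ = 1 ∨ γ = -1) ∧ γ ^ 2 = 1 := by
  have hγc : (conj γ) ^ n = 1 := by
    rw [← map_pow, hγ, map_one]
  have key : γ = conj γ := by
    have ha : z ^ (p₁ * p₂) = γ := by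
      rw [pow_mul, e₁, aux_pow_eq_self h₂.one_lt.le hm₂ γ hγ]
    have hb : z ^ (p₁ * p₂) = conj γ := by
      rw [mul_comm, pow_mul, e₂, aux_pow_eq_self h₁.one_lt.le hm₁ _ hγc]
    exact ha.symm.trans hb
  have hsq : γ ^ 2 = 1 := by
    have : γ * conj γ = 1 := by rw [← e₂, ← e₁, ← pow_add, e₃]
    rw [sq]; nth_rewrite 2 [key]; exact this
  refine ⟨?_, hsq⟩
  rw [sq] at hsq
  exact mul_self_eq_one_iff.mp hsq
end
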